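/- arXiv:1603.01166 — 2 statements merged into one kernel-verified Lean document; each statement's English description precedes it below -/
import Mathlib

section
/- Let a be a function assigning to each pair of natural numbers (i,j) with i < j a real number a(i,j) with 0 ≤ a(i,j) ≤ 1, satisfying a(i,j) = a(i,k)·a(k,j) whenever i < k < j, and let c_i denote the limit of the nonincreasing sequence j ↦ a(i,j). Then either c_i = 0 for every i, or lim_{i→∞} c_i = 1. -/
/-- For a multiplicative family `a i j ∈ [0,1]` (for `i < j`) with
`c i` the limit of the nonincreasing sequence `j ↦ a i j`, either `c i = 0` for
every `i`, or `c i → 1` as `i → ∞`. -/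
theorem stmt_1 (a : ℕ → ℕ → ℝ) (c : ℕ → ℝ)
    (h0 : ∀ i j, i < j → 0 ≤ a i j)
    (h1 : ∀ i j, i < j → a i j ≤ 1)
    (hmul : ∀ i k j, i < k → k < j → a i j = a i k * a k j)
    (hc : ∀ i, Filter.Tendsto (fun j => a i j) Filter.atTop (nhds (c i))) :
    (∀ i, c i = 0) ∨ Filter.Tendsto c Filter.atTop (nhds 1) := by
  -- c i ≥ 0
  have hc0 : ∀ i, 0 ≤ c i := by
    intro i
    refine ge_of_tendsto (hc i) ?_
    filter_upwards [Filter.eventually_gt_atTop i] with n hn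
    exact h0 i n hn
  have hc1 : ∀ i, c i ≤ 1 := by
    intro i
    refine le_of_tendsto (hc i) ?_
    filter_upwards [Filter.eventually_gt_atTop i] with n hn
    exact h1 i n hn
  -- key identity c i = a i j * c j for i < j
  have key : ∀ i j, i < j → c i = a i j * c j := by
    intro i j hij
    have h2 : Filter.Tendsto (fun n => a i j * a j n) Filter.atTop
        (nhds (a i j * c j)) := (hc j).const_mul _
    have h3 : Filter.Tendsto (fun n => a i n) Filter.atTop (nhds (a i j * c j)) := by
      refine h2.congr' ?_
      filter_upwards [Filter.eventually_gt_atTop j] with n hn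
      exact (hmul i j n hij hn).symm
    exact tendsto_nhds_unique (hc i) h3
  by_cases hall : ∀ i, c i = 0
  · exact Or.inl hall
  · right
    push_neg at hall
    obtain ⟨i₀, hi₀⟩ := hall
    have hpos : 0 < c i₀ := lt_of_le_of_ne (hc0 i₀) (Ne.symm hi₀)
    have hapos : ∀ j, i₀ < j → 0 < a i₀ j := by
      intro j hj
      rcases lt_or_eq_of_le (h0 i₀ j hj) with h | h
      · exact h
      · exfalso
        have := key i₀ j hj
        rw [← h, zero_mul] at this
        exact hi₀ this
    have heq : ∀ j, i₀ < j → c j = c i₀ / a i₀ j := by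
      intro j hj
      have := key i₀ j hj
      field_simp [ne_of_gt (hapos j hj)]
      linarith [this]
    have hdiv : Filter.Tendsto (fun j => c i₀ / a i₀ j) Filter.atTop
        (nhds 1) := by
      have : Filter.Tendsto (fun j => c i₀ / a i₀ j) Filter.atTop
          (nhds (c i₀ / c i₀)) := Filter.Tendsto.div tendsto_const_nhds (hc i₀) (ne_of_gt hpos)
      rwa [div_self (ne_of_gt hpos)] at this
    refine hdiv.congr' ?_
    filter_upwards [Filter.eventually_gt_atTop i₀] with j hj
    exact (heq j hj).symm
end

section
/- Let A be a commutative ring equipped with an ℕ-grading (a graded ring structure 𝒜 : ℕ → submodules of A). Let r be a natural number, let z_1, …, z_r ∈ A be homogeneous elements of degree 2 satisfying z_t² = 0 for each t, and let m_1, …, m_r be natural numbers. Then the degree-2r homogeneous component of the product ∏_{t=1}^{r} (1 + z_t)^{m_t} equals (∏_{t=1}^{r} m_t) · (z_1 z_2 ⋯ z_r). -/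
open DirectSum

private lemma one_add_pow_of_sq_zero {A : Type*} [CommRing A] (z : A) (hz : z ^ 2 = 0)
    (m : ℕ) : (1 + z) ^ m = 1 + m • z := by
  have hzz : z * z = 0 := by rw [← sq]; exact hz
  induction m with
  | zero => simp
  | succ n ih =>
    calc (1 + z) ^ (n + 1) = (1 + n • z) * (1 + z) := by rw [pow_succ, ih]
      _ = 1 + (n + 1) • z + (n : A) * (z * z) := by
          simp only [nsmul_eq_mul, Nat.cast_add, Nat.cast_one]; ring
      _ = 1 + (n + 1) • z := by rw [hzz]; ring

/-- In an ℕ-graded commutative ring, if `z 1, …, z r` are homogeneous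
of degree 2 with `z t ^ 2 = 0`, then the degree `2r` homogeneous component of
`∏ t, (1 + z t) ^ m t` is `(∏ t, m t) • (z 1 * ⋯ * z r)`. -/
theorem stmt_2 {A : Type*} [CommRing A] (𝒜 : ℕ → Submodule ℤ A) [GradedRing 𝒜]
    (r : ℕ) (z : Fin r → A) (hz : ∀ t, z t ∈ 𝒜 2) (hz2 : ∀ t, z t ^ 2 = 0)
    (m : Fin r → ℕ) :
    ((DirectSum.decompose 𝒜 (∏ t, (1 + z t) ^ m t) (2 * r) : 𝒜 (2 * r)) : A)
      = (∏ t, m t) • ∏ t, z t := by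
  have key : ∏ t, (1 + z t) ^ m t
      = ∑ S ∈ (Finset.univ : Finset (Fin r)).powerset, ∏ t ∈ S, m t • z t := by
    have h1 : ∀ t : Fin r, (1 + z t) ^ m t = m t • z t + 1 := by
      intro t; rw [one_add_pow_of_sq_zero (z t) (hz2 t), add_comm]
    simp_rw [h1]
    rw [Finset.prod_add]
    simp
  have hsmul : ∀ S : Finset (Fin r), ∏ t ∈ S, m t • z t
      = (∏ t ∈ S, m t) • ∏ t ∈ S, z t := by
    intro S
    simp only [nsmul_eq_mul, Finset.prod_mul_distrib, Nat.cast_prod]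
  have hmem : ∀ S : Finset (Fin r), (∏ t ∈ S, m t • z t) ∈ 𝒜 (2 * S.card) := by
    intro S
    have := SetLike.prod_mem_graded 𝒜 (fun _ : Fin r => (2 : ℕ)) (fun t => m t • z t)
      (F := S) (fun t _ => nsmul_mem (hz t) (m t))
    simpa [Finset.sum_const, mul_comm] using this
  rw [key, DirectSum.decompose_sum]
  rw [DFinsupp.finset_sum_apply, AddSubmonoidClass.coe_finset_sum]
  rw [Finset.sum_eq_single_of_mem (Finset.univ : Finset (Fin r))
    (Finset.mem_powerset_self _)]
  · rw [DirectSum.decompose_of_mem_same 𝒜 (by simpa using hmem Finset.univ)]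
    simpa using hsmul Finset.univ
  · intro S hS hne
    refine DirectSum.decompose_of_mem_ne 𝒜 (hmem S) ?_
    have hlt : S.card < r := by
      have := Finset.card_lt_card (Finset.ssubset_univ_iff.mpr hne)
      simpa using this
    omega
end
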